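/- arXiv:1709.08121 — 2 statements merged into one kernel-verified Lean document; each statement's English description precedes it below -/
import Mathlib

section
/- Let φ(z) = a_d z^d + ... + a_1 z + a_0 be a complex polynomial of degree d ≥ 2. If |z| > 2d · max_{0 ≤ i ≤ d} {1, |a_i/a_d|^{1/(d-i)}, |a_d|^{-1/(d-1)}}, then G_φ(z) = log|z| + (1/(d-1)) log|a_d| + ε where −log 2 ≤ ε ≤ log(3/2), and G_φ(z) = lim_n d^{-n} log max{1, |φ^n(z)|} is the escape-rate function. -/
/-!
With `M` the maximum in the hypothesis on `z`, on the region `2 d M ≤ ‖w‖` the leading term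
dominates: `‖φ w - a_d w^d‖ ≤ ‖a_d‖ ‖w‖^d / 2`.
Hence the region is forward invariant and `δ(w) := log ‖φ w‖ - d log ‖w‖` stays in
`[log ‖a_d‖ - log 2, log ‖a_d‖ + log (3/2)]`. Along the orbit, `u_n := log ‖φ^[n] z‖` satisfies
`u_{n+1} = d u_n + δ_n`, so `u_n / d^n` telescopes to `u_0 + ∑ δ_k / d^(k+1)`, and the geometric
series `∑ 1 / d^(k+1) = 1 / (d - 1)` turns the bounds on `δ_k` into bounds on the limit; the
`log ‖a_d‖ / (d - 1)` part is split off, and the rest is `ε`.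
-/

open Polynomial Filter Topology

theorem exists_tendsto_div_pow_of_sub_mul_mem_Icc {d lo hi : ℝ} (hd : 1 < d) {u : ℕ → ℝ}
    (hu : ∀ n, u (n + 1) - d * u n ∈ Set.Icc lo hi) :
    ∃ ε ∈ Set.Icc (lo / (d - 1)) (hi / (d - 1)),
      Tendsto (fun n => u n / d ^ n) atTop (𝓝 (u 0 + ε)) := by
  have hd0 : 0 < d := by linarith
  set t : ℕ → ℝ := fun n => (u (n + 1) - d * u n) / d ^ (n + 1)
  have htele : ∀ n, u (n + 1) / d ^ (n + 1) - u n / d ^ n = t n := by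
    intro n; simp only [t]; field_simp; ring
  have hgeom : ∀ c, HasSum (fun n : ℕ => c / d ^ (n + 1)) (c / (d - 1)) := by
    intro c
    have h := (hasSum_geometric_of_lt_one (inv_nonneg.2 hd0.le)
      (inv_lt_one_of_one_lt₀ hd)).mul_left (c / d)
    have hterm : (fun n : ℕ => c / d ^ (n + 1)) = fun n => c / d * d⁻¹ ^ n := by
      ext n; rw [pow_succ', inv_pow]; ring
    have hval : c / d * (1 - d⁻¹)⁻¹ = c / (d - 1) := by
      have : d - 1 ≠ 0 := by linarith
      field_simp
    rwa [hterm, ← hval]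
  have hlo : ∀ n, lo / d ^ (n + 1) ≤ t n :=
    fun n => div_le_div_of_nonneg_right (hu n).1 (by positivity)
  have hhi : ∀ n, t n ≤ hi / d ^ (n + 1) :=
    fun n => div_le_div_of_nonneg_right (hu n).2 (by positivity)
  have ht : Summable t := by
    have h : Summable fun n => t n - lo / d ^ (n + 1) :=
      Summable.of_nonneg_of_le (fun n => sub_nonneg.2 (hlo n))
        (fun n => by rw [sub_div]; linarith [hhi n])
        (hgeom (hi - lo)).summable
    simpa using h.add (hgeom lo).summable
  refine ⟨∑' n, t n, ⟨hasSum_le hlo (hgeom lo) ht.hasSum, hasSum_le hhi ht.hasSum (hgeom hi)⟩, ?_⟩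
  refine (ht.hasSum.tendsto_sum_nat.const_add (u 0)).congr fun n => ?_
  simp only [← htele, Finset.sum_range_sub (fun n => u n / d ^ n), pow_zero, div_one]
  ring

theorem pow_sub_mul_pow_le {M x : ℝ} {d i : ℕ} (hi : i < d) (hM : 0 ≤ M) (hx : 2 * d * M ≤ x) :
    M ^ (d - i) * x ^ i ≤ x ^ d / (2 * d) := by
  have hd : (1 : ℝ) ≤ 2 * d := by
    have : (1 : ℝ) ≤ d := by exact_mod_cast hi.trans_le' (Nat.zero_le i)
    linarith
  have hx0 : 0 ≤ x := le_trans (by positivity) hx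
  have hMx : M ≤ x / (2 * d) := by rw [le_div_iff₀ (by linarith)]; linarith
  calc M ^ (d - i) * x ^ i ≤ (x / (2 * d)) ^ (d - i) * x ^ i := by gcongr
    _ = x ^ d / (2 * d) ^ (d - i) := by
      rw [div_pow, div_mul_eq_mul_div, ← pow_add, Nat.sub_add_cancel hi.le]
    _ ≤ x ^ d / (2 * d) := by
      gcongr
      exact le_self_pow₀ hd (by omega)

theorem le_pow_of_rpow_one_div_le {x M : ℝ} {n : ℕ} (hn : n ≠ 0) (hx : 0 ≤ x) (hM : 0 ≤ M)
    (h : x ^ (1 / (n : ℝ)) ≤ M) : x ≤ M ^ n := by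
  rwa [one_div, Real.rpow_inv_le_iff_of_pos hx hM (by positivity), Real.rpow_natCast] at h

section NormedField

variable {K : Type*} [NormedField K] {φ : K[X]} {d : ℕ} {M : ℝ} {w : K}

theorem norm_eval_sub_leading_le (hdeg : φ.natDegree ≤ d) (hM : 0 ≤ M)
    (hcoeff : ∀ i < d, ‖φ.coeff i‖ ≤ ‖φ.coeff d‖ * M ^ (d - i)) (hw : 2 * d * M ≤ ‖w‖) :
    ‖φ.eval w - φ.coeff d * w ^ d‖ ≤ ‖φ.coeff d‖ * ‖w‖ ^ d / 2 := by
  rw [eval_eq_sum_range' (Nat.lt_succ_of_le hdeg), Finset.sum_range_succ, add_sub_cancel_right]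
  calc ‖∑ i ∈ Finset.range d, φ.coeff i * w ^ i‖
      ≤ ∑ i ∈ Finset.range d, ‖φ.coeff d‖ * (‖w‖ ^ d / (2 * d)) := by
        refine norm_sum_le_of_le _ fun i hi => ?_
        have hid := Finset.mem_range.1 hi
        rw [norm_mul, norm_pow]
        calc ‖φ.coeff i‖ * ‖w‖ ^ i ≤ ‖φ.coeff d‖ * M ^ (d - i) * ‖w‖ ^ i := by
              gcongr; exact hcoeff i hid
          _ ≤ ‖φ.coeff d‖ * (‖w‖ ^ d / (2 * d)) := by
              rw [mul_assoc]; gcongr; exact pow_sub_mul_pow_le hid hM hw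
    _ ≤ ‖φ.coeff d‖ * ‖w‖ ^ d / 2 := by
        rw [Finset.sum_const, Finset.card_range, nsmul_eq_mul]
        rcases d.eq_zero_or_pos with rfl | hd
        · simp only [CharP.cast_eq_zero, zero_mul]; positivity
        · exact le_of_eq (by field_simp)

theorem norm_eval_mem_Icc (hdeg : φ.natDegree ≤ d) (hM : 0 ≤ M)
    (hcoeff : ∀ i < d, ‖φ.coeff i‖ ≤ ‖φ.coeff d‖ * M ^ (d - i)) (hw : 2 * d * M ≤ ‖w‖) :
    ‖φ.eval w‖ ∈ Set.Icc (‖φ.coeff d‖ * ‖w‖ ^ d / 2) (3 / 2 * (‖φ.coeff d‖ * ‖w‖ ^ d)) := by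
  have h := (abs_norm_sub_norm_le _ _).trans (norm_eval_sub_leading_le hdeg hM hcoeff hw)
  rw [norm_mul, norm_pow, abs_le] at h
  constructor <;> linarith [h.1, h.2]

theorem log_norm_eval_sub_mem_Icc (hdeg : φ.natDegree ≤ d) (ha : φ.coeff d ≠ 0) (hM : 0 ≤ M)
    (hcoeff : ∀ i < d, ‖φ.coeff i‖ ≤ ‖φ.coeff d‖ * M ^ (d - i)) (hw0 : w ≠ 0)
    (hw : 2 * d * M ≤ ‖w‖) :
    Real.log ‖φ.eval w‖ - d * Real.log ‖w‖ ∈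
      Set.Icc (Real.log ‖φ.coeff d‖ - Real.log 2) (Real.log ‖φ.coeff d‖ + Real.log (3 / 2)) := by
  have hA : 0 < ‖φ.coeff d‖ * ‖w‖ ^ d := by positivity
  have hlogA : Real.log (‖φ.coeff d‖ * ‖w‖ ^ d) = Real.log ‖φ.coeff d‖ + d * Real.log ‖w‖ := by
    rw [Real.log_mul (by positivity) (by positivity), Real.log_pow]
  obtain ⟨hlo, hhi⟩ := norm_eval_mem_Icc hdeg hM hcoeff hw
  have hlo' := Real.log_le_log (by positivity) hlo
  have hhi' := Real.log_le_log ((half_pos hA).trans_le hlo) hhi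
  rw [Real.log_div hA.ne' two_ne_zero, hlogA] at hlo'
  rw [Real.log_mul (by norm_num) hA.ne', hlogA] at hhi'
  constructor <;> linarith

theorem norm_le_norm_eval (hd : 2 ≤ d) (hdeg : φ.natDegree ≤ d) (hM : 0 ≤ M)
    (hcoeff : ∀ i < d, ‖φ.coeff i‖ ≤ ‖φ.coeff d‖ * M ^ (d - i))
    (hlead : 1 ≤ ‖φ.coeff d‖ * M ^ (d - 1)) (hw : 2 * d * M ≤ ‖w‖) :
    ‖w‖ ≤ ‖φ.eval w‖ := by
  have h2d : (2 : ℝ) ≤ (2 * d) ^ (d - 1) :=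
    calc (2 : ℝ) ≤ 2 * d := by norm_cast; omega
      _ ≤ (2 * d) ^ (d - 1) := le_self_pow₀ (by norm_cast; omega) (by omega)
  calc ‖w‖ ≤ (2 * d) ^ (d - 1) / 2 * (‖φ.coeff d‖ * M ^ (d - 1)) * ‖w‖ := by
        refine le_mul_of_one_le_left (norm_nonneg w) ?_
        nlinarith
    _ = ‖φ.coeff d‖ * (2 * d * M) ^ (d - 1) * ‖w‖ / 2 := by ring
    _ ≤ ‖φ.coeff d‖ * ‖w‖ ^ (d - 1) * ‖w‖ / 2 := by gcongr
    _ = ‖φ.coeff d‖ * ‖w‖ ^ d / 2 := by rw [mul_assoc, ← pow_succ, Nat.sub_add_cancel (by omega)]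
    _ ≤ ‖φ.eval w‖ := (norm_eval_mem_Icc hdeg hM hcoeff hw).1

noncomputable def coeffBound (φ : K[X]) (d : ℕ) : ℝ :=
  (Finset.range (d + 1)).sup' (Finset.nonempty_range_iff.mpr (Nat.succ_ne_zero d))
    (fun i => max 1 (max (‖φ.coeff i / φ.coeff d‖ ^ ((1 : ℝ) / ((d : ℝ) - (i : ℝ))))
      (‖φ.coeff d‖ ^ (-(1 : ℝ) / ((d : ℝ) - 1)))))

theorem le_coeffBound {i : ℕ} (hi : i ≤ d) :
    max 1 (max (‖φ.coeff i / φ.coeff d‖ ^ ((1 : ℝ) / ((d : ℝ) - (i : ℝ))))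
      (‖φ.coeff d‖ ^ (-(1 : ℝ) / ((d : ℝ) - 1)))) ≤ coeffBound φ d :=
  Finset.le_sup' (fun i => max 1 (max (‖φ.coeff i / φ.coeff d‖ ^ ((1 : ℝ) / ((d : ℝ) - (i : ℝ))))
    (‖φ.coeff d‖ ^ (-(1 : ℝ) / ((d : ℝ) - 1))))) (Finset.mem_range_succ_iff.2 hi)

theorem one_le_coeffBound : 1 ≤ coeffBound φ d :=
  (le_max_left _ _).trans (le_coeffBound (φ := φ) (Nat.zero_le d))

theorem norm_coeff_le_coeffBound (ha : φ.coeff d ≠ 0) {i : ℕ} (hi : i < d) :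
    ‖φ.coeff i‖ ≤ ‖φ.coeff d‖ * coeffBound φ d ^ (d - i) := by
  have h := (le_max_left _ _).trans ((le_max_right _ _).trans (le_coeffBound (φ := φ) hi.le))
  rw [← Nat.cast_sub hi.le] at h
  have h' := le_pow_of_rpow_one_div_le (by omega) (norm_nonneg _)
    (zero_le_one.trans one_le_coeffBound) h
  rwa [norm_div, div_le_iff₀' (norm_pos_iff.2 ha)] at h'

theorem one_le_norm_coeff_mul_coeffBound_pow (ha : φ.coeff d ≠ 0) (hd : 2 ≤ d) :
    1 ≤ ‖φ.coeff d‖ * coeffBound φ d ^ (d - 1) := by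
  have h := (le_max_right _ _).trans
    ((le_max_right _ _).trans (le_coeffBound (φ := φ) (Nat.zero_le d)))
  rw [neg_div, Real.rpow_neg (norm_nonneg _), ← Real.inv_rpow (norm_nonneg _),
    ← Nat.cast_pred (by omega)] at h
  have h' := le_pow_of_rpow_one_div_le (n := d - 1) (by omega) (inv_nonneg.2 (norm_nonneg _))
    (zero_le_one.trans one_le_coeffBound) h
  rwa [inv_le_iff_one_le_mul₀' (norm_pos_iff.2 ha)] at h'

end NormedField

/-- archimedean escape-rate estimate: for a complex polynomial φ of
degree d ≥ 2 and |z| > 2d · max_{0≤i≤d} {1, |a_i/a_d|^{1/(d-i)}, |a_d|^{-1/(d-1)}},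
G_φ(z) = log|z| + (1/(d-1)) log|a_d| + ε with -log 2 ≤ ε ≤ log(3/2). -/
theorem stmt2 (φ : Polynomial ℂ) (d : ℕ) (hd : 2 ≤ d) (hdeg : φ.natDegree = d)
    (z : ℂ)
    (hz : ‖z‖ > (2 * d : ℝ) *
      (Finset.range (d + 1)).sup' (Finset.nonempty_range_iff.mpr (Nat.succ_ne_zero d))
        (fun i => max 1 (max (‖φ.coeff i / φ.coeff d‖ ^ ((1 : ℝ) / ((d : ℝ) - (i : ℝ))))
          (‖φ.coeff d‖ ^ (-(1 : ℝ) / ((d : ℝ) - 1)))))) :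
    ∃ ε : ℝ, -Real.log 2 ≤ ε ∧ ε ≤ Real.log (3 / 2) ∧
      Tendsto
        (fun n : ℕ => ((d : ℝ) ^ n)⁻¹ * Real.log (max 1 ‖(fun x => φ.eval x)^[n] z‖))
        atTop
        (nhds (Real.log ‖z‖ + (1 / ((d : ℝ) - 1)) * Real.log ‖φ.coeff d‖ + ε)) := by
  change 2 * d * coeffBound φ d < ‖z‖ at hz
  have ha : φ.coeff d ≠ 0 := by
    rw [← hdeg]; exact leadingCoeff_ne_zero.2 (by rintro rfl; simp at hdeg; omega)
  set M := coeffBound φ d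
  have hM : 1 ≤ M := one_le_coeffBound
  have hcoeff : ∀ i < d, ‖φ.coeff i‖ ≤ ‖φ.coeff d‖ * M ^ (d - i) :=
    fun i => norm_coeff_le_coeffBound ha
  have hS : Set.MapsTo (fun x => φ.eval x) {w | 2 * d * M ≤ ‖w‖} {w | 2 * d * M ≤ ‖w‖} :=
    fun w hw => le_trans hw <| norm_le_norm_eval hd hdeg.le (by linarith) hcoeff
      (one_le_norm_coeff_mul_coeffBound_pow ha hd) hw
  have hd' : (2 : ℝ) ≤ d := by exact_mod_cast hd
  have horbit : ∀ n, 1 < ‖(fun x => φ.eval x)^[n] z‖ := fun n =>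
    (by nlinarith : (1 : ℝ) < 2 * d * M).trans_le (hS.iterate n hz.le)
  obtain ⟨ε, hε, hlim⟩ := exists_tendsto_div_pow_of_sub_mul_mem_Icc (by linarith : (1 : ℝ) < d)
    (u := fun n => Real.log ‖(fun x => φ.eval x)^[n] z‖) fun n => by
      simp only [Function.iterate_succ_apply']
      exact log_norm_eval_sub_mem_Icc hdeg.le ha (by linarith) hcoeff
        (norm_pos_iff.1 (one_pos.trans (horbit n))) (hS.iterate n hz.le)
  have hlog2 : Real.log 2 / (d - 1) ≤ Real.log 2 :=
    div_le_self (Real.log_nonneg one_le_two) (by linarith)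
  have hlog32 : Real.log (3 / 2) / (d - 1) ≤ Real.log (3 / 2) :=
    div_le_self (Real.log_nonneg (by norm_num)) (by linarith)
  refine ⟨ε - Real.log ‖φ.coeff d‖ / (d - 1), ?_, ?_, ?_⟩
  · linarith [hε.1, sub_div (Real.log ‖φ.coeff d‖) (Real.log 2) (d - 1)]
  · linarith [hε.2, add_div (Real.log ‖φ.coeff d‖) (Real.log (3 / 2)) (d - 1)]
  · convert hlim using 2 with n
    · rw [max_eq_right (horbit n).le, inv_mul_eq_div]
    · simp only [Function.iterate_zero_apply]; ring
end

section
/- If φ is a polynomial of degree d ≥ 2 defined over a number field K, then there exists an affine map μ(z) = az + b with a, b algebraic such that μ^{-1} ∘ φ ∘ μ has the normal form f_c (fixed point at 0 and monic derivative), and the field of definition L of μ^{-1} ∘ φ ∘ μ satisfies [L : K] ≤ d(d−1). -/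
/-!
Conjugate `φ` by `μ z = a z + γ` with `γ` a fixed point of `φ`: the conjugate fixes `0`, and its
leading coefficient is `a ^ (d - 1) · lc φ`, so its derivative is monic exactly when
`a ^ (d - 1) = (d · lc φ)⁻¹`, which is possible in characteristic zero. Since `γ` is a root of
`φ - X`, of degree `d`, and `a` a root of `X ^ (d - 1) - (d · lc φ)⁻¹`, the compositum bound
`[K(γ, a) : K] ≤ [K(γ) : K] [K(a) : K]` gives `d (d - 1)`.
-/

open Polynomial IntermediateField

namespace Polynomial

theorem monic_derivative_of_leadingCoeff_mul_natDegree {R : Type*} [Semiring R]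
    {p : R[X]} (h : p.leadingCoeff * p.natDegree = 1) : (derivative p).Monic := by
  nontriviality R
  obtain ⟨n, hn⟩ : ∃ n, p.natDegree = n + 1 :=
    Nat.exists_eq_succ_of_ne_zero fun h0 => by simp [h0] at h
  refine monic_of_natDegree_le_of_coeff_eq_one n ?_ ?_
  · simpa [hn] using natDegree_derivative_le p
  · rwa [coeff_derivative, ← hn, ← Nat.cast_succ, Nat.succ_eq_add_one, ← hn]

theorem natDegree_sub_X {R : Type*} [Ring R] {p : R[X]} (hp : 2 ≤ p.natDegree) :
    (p - X).natDegree = p.natDegree :=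
  natDegree_sub_eq_left_of_natDegree_lt (natDegree_X_le.trans_lt hp)

variable {F : Type*} [Field F]

/-- `μ⁻¹ ∘ p ∘ μ` for the affine map `μ z = a * z + b`. -/
noncomputable def affineConj (p : F[X]) (a b : F) : F[X] :=
  C a⁻¹ * (p.comp (C a * X + C b) - C b)

theorem map_affineConj {F' : Type*} [Field F'] (f : F →+* F') (p : F[X]) (a b : F) :
    (affineConj p a b).map f = affineConj (p.map f) (f a) (f b) := by
  simp [affineConj, map_comp]

variable {p : F[X]} {a : F} (b : F)

theorem mul_eval_affineConj_add (ha : a ≠ 0) (z : F) :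
    a * (affineConj p a b).eval z + b = p.eval (a * z + b) := by
  simp [affineConj, eval_comp, ha]

theorem eval_zero_affineConj (hb : p.eval b = b) : (affineConj p a b).eval 0 = 0 := by
  simp [affineConj, eval_comp, hb]

theorem natDegree_affineConj (ha : a ≠ 0) : (affineConj p a b).natDegree = p.natDegree := by
  rw [affineConj, natDegree_C_mul (inv_ne_zero ha), natDegree_sub_C, natDegree_comp,
    natDegree_linear ha, mul_one]

theorem leadingCoeff_affineConj (ha : a ≠ 0) (hp : p.natDegree ≠ 0) :
    (affineConj p a b).leadingCoeff = a ^ (p.natDegree - 1) * p.leadingCoeff := by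
  have hlin : (C a * X + C b).natDegree = 1 := natDegree_linear ha
  have hcomp : (C b).degree < (p.comp (C a * X + C b)).degree := by
    refine degree_C_le.trans_lt ?_
    rw [degree_eq_natDegree, natDegree_comp, hlin, mul_one]
    · exact_mod_cast Nat.pos_of_ne_zero hp
    · exact fun h => hp (by simpa [natDegree_comp, hlin] using congrArg natDegree h)
  obtain ⟨n, hn⟩ := Nat.exists_eq_succ_of_ne_zero hp
  rw [affineConj, leadingCoeff_mul, leadingCoeff_C, leadingCoeff_sub_of_degree_lt hcomp,
    leadingCoeff_comp (by rw [hlin]; exact one_ne_zero), leadingCoeff_linear ha, hn, pow_succ]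
  field_simp
  rfl

theorem monic_derivative_affineConj (ha : a ≠ 0)
    (h : a ^ (p.natDegree - 1) * (p.leadingCoeff * p.natDegree) = 1) :
    (derivative (affineConj p a b)).Monic := by
  have hp : p.natDegree ≠ 0 := fun h0 => by simp [h0] at h
  apply monic_derivative_of_leadingCoeff_mul_natDegree
  rw [leadingCoeff_affineConj b ha hp, natDegree_affineConj b ha, mul_assoc, h]

theorem pow_mul_leadingCoeff_mul_natDegree_map {K E : Type*} [Field K] [Field E] [Algebra K E]
    {p : K[X]} {a : E} (hp : p.leadingCoeff * p.natDegree ≠ 0)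
    (ha : aeval a (X ^ (p.natDegree - 1) - C (p.leadingCoeff * p.natDegree)⁻¹) = 0) :
    a ^ ((p.map (algebraMap K E)).natDegree - 1) *
      ((p.map (algebraMap K E)).leadingCoeff * (p.map (algebraMap K E)).natDegree) = 1 := by
  rw [map_sub, aeval_X_pow, aeval_C, sub_eq_zero] at ha
  rw [natDegree_map, leadingCoeff_map, ha, ← map_natCast (algebraMap K E), ← map_mul, ← map_mul,
    inv_mul_cancel₀ hp, map_one]

end Polynomial

namespace IntermediateField

variable {K E : Type*} [Field K] [Field E] [Algebra K E]

theorem coeff_affineConj_mem (L : IntermediateField K E) (p : K[X]) {a b : E} (ha : a ∈ L)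
    (hb : b ∈ L) (n : ℕ) : (affineConj (p.map (algebraMap K E)) a b).coeff n ∈ L := by
  have : affineConj (p.map (algebraMap K E)) a b =
      (affineConj (p.map (algebraMap K L)) ⟨a, ha⟩ ⟨b, hb⟩).map (algebraMap L E) := by
    rw [map_affineConj, Polynomial.map_map, ← IsScalarTower.algebraMap_eq]
    rfl
  rw [this, coeff_map]
  exact Subtype.prop _

theorem finrank_adjoin_simple_le_natDegree {x : E} {p : K[X]} (hp : p ≠ 0)
    (hx : aeval x p = 0) : Module.finrank K K⟮x⟯ ≤ p.natDegree := by
  rw [adjoin.finrank (IsAlgebraic.isIntegral ⟨p, hp, hx⟩)]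
  exact natDegree_le_natDegree (minpoly.degree_le_of_ne_zero K x hp hx)

theorem finrank_adjoin_pair_le {x y : E} {p q : K[X]} (hp : p ≠ 0) (hq : q ≠ 0)
    (hx : aeval x p = 0) (hy : aeval y q = 0) :
    Module.finrank K K⟮x, y⟯ ≤ p.natDegree * q.natDegree := by
  rw [Set.insert_eq, adjoin_union]
  exact (finrank_sup_le _ _).trans <| Nat.mul_le_mul
    (finrank_adjoin_simple_le_natDegree hp hx) (finrank_adjoin_simple_le_natDegree hq hy)

end IntermediateField

/-- a degree d ≥ 2 polynomial φ over a number field K is affine conjugate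
(over the algebraic closure) to a polynomial g in the normal form f_c (g(0) = 0 and g'
monic), where the affine map μ(z) = az + b and the coefficients of g all lie in a number
field L ⊇ K with [L : K] ≤ d(d-1). -/
theorem stmt4 (K : Type*) [Field K] [NumberField K]
    (φ : Polynomial K) (d : ℕ) (hd : 2 ≤ d) (hdeg : φ.natDegree = d) :
    ∃ (L : IntermediateField K (AlgebraicClosure K)) (a b : AlgebraicClosure K)
      (g : Polynomial (AlgebraicClosure K)),
      FiniteDimensional K L ∧ Module.finrank K L ≤ d * (d - 1) ∧
      a ≠ 0 ∧ a ∈ L ∧ b ∈ L ∧ (∀ n : ℕ, g.coeff n ∈ L) ∧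
      g.natDegree = d ∧ g.eval 0 = 0 ∧ (Polynomial.derivative g).Monic ∧
      ∀ z : AlgebraicClosure K,
        a * g.eval z + b = (φ.map (algebraMap K (AlgebraicClosure K))).eval (a * z + b) := by
  set A := AlgebraicClosure K
  set ψ := φ.map (algebraMap K A)
  have hψ_deg : ψ.natDegree = d := by rw [natDegree_map, hdeg]
  have hfix_deg : (φ - X).natDegree = d := hdeg ▸ natDegree_sub_X (hdeg ▸ hd)
  have hfix_ne : φ - X ≠ 0 := ne_zero_of_natDegree_gt (n := 0) (by omega)
  obtain ⟨γ, hγ⟩ :=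
    IsAlgClosed.exists_aeval_eq_zero A (φ - X) (natDegree_pos_iff_degree_pos.1 (by omega)).ne'
  have hγψ : ψ.eval γ = γ := by simpa [ψ, sub_eq_zero, eval_map_algebraMap] using hγ
  have hlc : φ.leadingCoeff * φ.natDegree ≠ 0 :=
    mul_ne_zero (leadingCoeff_ne_zero.2 (ne_zero_of_natDegree_gt (hdeg ▸ hd)))
      (Nat.cast_ne_zero.2 (by omega))
  set scale := X ^ (φ.natDegree - 1) - C (φ.leadingCoeff * φ.natDegree)⁻¹
  have hscale_deg : scale.natDegree = d - 1 := by rw [natDegree_X_pow_sub_C, hdeg]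
  have hscale_ne : scale ≠ 0 := ne_zero_of_natDegree_gt (n := 0) (by omega)
  obtain ⟨a, ha⟩ :=
    IsAlgClosed.exists_aeval_eq_zero A scale (natDegree_pos_iff_degree_pos.1 (by omega)).ne'
  have hnormal : a ^ (ψ.natDegree - 1) * (ψ.leadingCoeff * ψ.natDegree) = 1 :=
    pow_mul_leadingCoeff_mul_natDegree_map hlc ha
  have ha0 : a ≠ 0 := ne_zero_pow (by omega) (left_ne_zero_of_mul_eq_one hnormal)
  have hγL : γ ∈ K⟮γ, a⟯ := mem_adjoin_pair_left K γ a
  have haL : a ∈ K⟮γ, a⟯ := mem_adjoin_pair_right K γ a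
  refine ⟨K⟮γ, a⟯, a, γ, affineConj ψ a γ,
    finiteDimensional_adjoin_pair (IsAlgebraic.isIntegral ⟨_, hfix_ne, hγ⟩)
      (IsAlgebraic.isIntegral ⟨_, hscale_ne, ha⟩),
    (finrank_adjoin_pair_le hfix_ne hscale_ne hγ ha).trans_eq (by rw [hfix_deg, hscale_deg]),
    ha0, haL, hγL, coeff_affineConj_mem _ φ haL hγL, hψ_deg ▸ natDegree_affineConj γ ha0,
    eval_zero_affineConj γ hγψ, monic_derivative_affineConj γ ha0 hnormal,
    mul_eval_affineConj_add γ ha0⟩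
end
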